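/- Let u be a smooth 1-periodic real function with mean zero and Fourier expansion u(x) = ∑_k û_k e^{2πikx}, and let 3/4 < α ≤ 1. Then for all x and any real κ ≥ 1, |u_x(x)| ≤ √2 (2π)^{1-α} κ^{3/2-α} ‖(-Δ)^{α/2} u‖_{L²(0,1)} + √(2/(4α-3)) (2π)^{1-2α} κ^{3/2-2α} ‖(-Δ)^α u‖_{L²(0,1)}. -/

import Mathlib

open Real

private lemma tsum_cauchy_schwarz {ι : Type*} (f g : ι → ℝ) (hf : ∀ i, 0 ≤ f i)
    (hg : ∀ i, 0 ≤ g i) (hf2 : Summable fun i => f i ^ 2) (hg2 : Summable fun i => g i ^ 2) :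
    ∑' i, f i * g i ≤ Real.sqrt (∑' i, f i ^ 2) * Real.sqrt (∑' i, g i ^ 2) := by
  have hsum : Summable fun i => f i * g i := by
    refine Summable.of_nonneg_of_le (fun i => mul_nonneg (hf i) (hg i)) (fun i => ?_)
      ((hf2.add hg2).mul_left (1/2))
    nlinarith [sq_nonneg (f i - g i)]
  refine Summable.tsum_le_of_sum_le hsum fun s => ?_
  have h1 : (∑ i ∈ s, f i * g i) ^ 2 ≤ (∑ i ∈ s, f i ^ 2) * ∑ i ∈ s, g i ^ 2 :=
    Finset.sum_mul_sq_le_sq_mul_sq s f g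
  have h2 : ∑ i ∈ s, f i ^ 2 ≤ ∑' i, f i ^ 2 := Summable.sum_le_tsum s (fun i _ => sq_nonneg _) hf2
  have h3 : ∑ i ∈ s, g i ^ 2 ≤ ∑' i, g i ^ 2 := Summable.sum_le_tsum s (fun i _ => sq_nonneg _) hg2
  have h4 : (0:ℝ) ≤ ∑ i ∈ s, f i * g i :=
    Finset.sum_nonneg fun i _ => mul_nonneg (hf i) (hg i)
  have h5 : (∑ i ∈ s, f i * g i) ^ 2 ≤ (∑' i, f i ^ 2) * ∑' i, g i ^ 2 := by
    refine h1.trans (mul_le_mul h2 h3 (Finset.sum_nonneg fun i _ => sq_nonneg _)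
      (tsum_nonneg fun i => sq_nonneg _))
  calc ∑ i ∈ s, f i * g i = Real.sqrt ((∑ i ∈ s, f i * g i) ^ 2) := (Real.sqrt_sq h4).symm
    _ ≤ Real.sqrt ((∑' i, f i ^ 2) * ∑' i, g i ^ 2) := Real.sqrt_le_sqrt h5
    _ = Real.sqrt (∑' i, f i ^ 2) * Real.sqrt (∑' i, g i ^ 2) :=
        Real.sqrt_mul (tsum_nonneg fun i => sq_nonneg _) _

private lemma tangent_ineq {s a b : ℝ} (hs : 0 < s) (ha : 0 < a) (hab : a ≤ b) :
    s * (b - a) * b ^ (-(s+1)) + b ^ (-s) ≤ a ^ (-s) := by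
  have hb : 0 < b := ha.trans_le hab
  have hber : 1 + (1+s) * ((b-a)/a) ≤ (1 + (b-a)/a) ^ (1+s) :=
    one_add_mul_self_le_rpow_one_add
      (le_trans (by norm_num) (div_nonneg (sub_nonneg.2 hab) ha.le)) (by linarith)
  have hba : (1:ℝ) + (b-a)/a = b/a := by field_simp; ring
  rw [hba] at hber
  have h2 : (b/a) ^ (1+s) = (b/a) * (b/a) ^ s := by
    rw [Real.rpow_add (by positivity), Real.rpow_one]
  have key : b + s*(b-a) ≤ b * ((b/a) ^ s) := by
    have h3 := mul_le_mul_of_nonneg_left hber ha.le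
    rw [h2] at h3
    calc b + s*(b-a) = a * (1 + (1+s)*((b-a)/a)) := by field_simp; ring
      _ ≤ a * ((b/a) * (b/a)^s) := h3
      _ = b * (b/a)^s := by field_simp
  have hX : (b/a)^s = b^s * a^(-s) := by
    rw [Real.div_rpow hb.le ha.le, Real.rpow_neg ha.le, div_eq_mul_inv]
  have hbs : (0:ℝ) < b^(-s) := Real.rpow_pos_of_pos hb _
  have hmul := mul_le_mul_of_nonneg_left key hbs.le
  have e1 : b^(-s) * (b * ((b/a)^s)) = b^(-s+s+1) * a^(-s) := by
    rw [hX, Real.rpow_add hb, Real.rpow_add hb, Real.rpow_one]; ring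
  have h1 : b^(-s+1) = b^(-s)*b := by rw [Real.rpow_add hb, Real.rpow_one]
  have h4 : b^(-(s+1)) * b = b^(-s) := by
    rw [show b ^ (-(s+1)) * b = b ^ (-(s+1)) * b^(1:ℝ) by rw [Real.rpow_one],
      ← Real.rpow_add hb]
    ring_nf
  have e2 : b^(-s) * (b + s*(b-a)) = b^(-s)*b + s*(b-a)*b^(-s) := by ring
  rw [e1, e2] at hmul
  have e3 : (-s+s+1 : ℝ) = 1 := by ring
  rw [e3, Real.rpow_one, ← h1] at hmul
  -- hmul : b^(-s+1) + s*(b-a)*b^(-s) ≤ b * a^(-s)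
  refine le_of_mul_le_mul_right ?_ hb
  calc (s*(b-a)*b^(-(s+1)) + b^(-s)) * b = s*(b-a)*(b^(-(s+1))*b) + b^(-s)*b := by ring
    _ = s*(b-a)*b^(-s) + b^(-s+1) := by rw [h4, ← h1]
    _ ≤ b*a^(-s) := by linarith [hmul]
    _ = a^(-s)*b := by ring

private lemma telescope_tail {r : ℝ} (hr : 1 < r) (a : ℕ) (ha : 1 ≤ a) (N : ℕ) :
    (r-1) * ∑ n ∈ Finset.Icc (a+1) N, (n:ℝ) ^ (-r) ≤ (a:ℝ)^(1-r) := by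
  have key : ∀ N : ℕ, (r-1) * ∑ n ∈ Finset.Icc (a+1) N, (n:ℝ) ^ (-r)
      ≤ (a:ℝ)^(1-r) - ((max a N : ℕ):ℝ)^(1-r) := by
    intro N
    induction N with
    | zero =>
      rw [Finset.Icc_eq_empty (by omega)]
      simp [Nat.max_eq_left (Nat.zero_le a)]
    | succ N ih =>
      by_cases h : a + 1 ≤ N + 1
      · have haN : a ≤ N := by omega
        rw [Finset.sum_Icc_succ_top h]
        have hmax1 : max a (N+1) = N+1 := by omega
        have hmax2 : max a N = N := by omega
        rw [hmax2] at ih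
        rw [hmax1]
        have hN1 : (1:ℝ) ≤ (N:ℝ) := by
          have : 1 ≤ N := le_trans ha haN
          exact_mod_cast this
        have htan := tangent_ineq (s := r - 1) (a := (N:ℝ)) (b := (N:ℝ)+1)
          (by linarith) (by linarith) (by linarith)
        have e1 : ((N:ℝ)+1) - (N:ℝ) = 1 := by ring
        have e2 : (-(r-1+1) : ℝ) = -r := by ring
        have e3 : (-(r-1) : ℝ) = 1-r := by ring
        rw [e1, e2, e3, mul_one] at htan
        -- htan : (r-1) * (N+1)^(-r) + (N+1)^(1-r) ≤ N^(1-r)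
        have hcast : (((N+1 : ℕ)):ℝ) = (N:ℝ)+1 := by push_cast; ring
        rw [mul_add, hcast]
        nlinarith [htan, ih]
      · rw [Finset.Icc_eq_empty (by omega)]
        have : max a (N+1) = a := by omega
        rw [this]
        simp
  have h := key N
  have : (0:ℝ) ≤ ((max a N : ℕ):ℝ)^(1-r) := Real.rpow_nonneg (by positivity) _
  linarith

private lemma bernoulli_two_rpow {p : ℝ} (hp0 : 0 ≤ p) (hp1 : p ≤ 1) : (2:ℝ)^p ≤ 1 + p := by
  have h := rpow_one_add_le_one_add_mul_self (s := (1:ℝ)) (by norm_num) hp0 hp1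
  norm_num at h
  linarith

set_option maxHeartbeats 1000000 in
private lemma claim_low {p lam κ : ℝ} (m : ℕ) (hm : 1 ≤ m) (hp0 : 0 ≤ p) (hp1 : p ≤ 1/2)
    (hl0 : 0 ≤ lam) (hl1 : lam ≤ 1) (hκ : (m:ℝ) + (2*lam - lam^2) ≤ κ) :
    (∑ n ∈ Finset.Icc 1 m, (n:ℝ)^p) + lam^2 * ((m:ℝ)+1)^p ≤ κ^(p+1) := by
  have hmR : (1:ℝ) ≤ (m:ℝ) := by exact_mod_cast hm
  have hθ0 : 0 ≤ 2*lam - lam^2 := by nlinarith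
  have hκ0 : (0:ℝ) ≤ κ := by linarith
  -- bound the finite sum
  have hsum : (∑ n ∈ Finset.Icc 1 m, (n:ℝ)^p) ≤ 1 + ((m:ℝ)-1)*(m:ℝ)^p := by
    have h1m : (1:ℕ) ∈ Finset.Icc 1 m := by simp [hm]
    rw [← Finset.insert_erase h1m, Finset.sum_insert (Finset.notMem_erase _ _),
      Finset.Icc_erase_left]
    have h1 : ((1:ℕ):ℝ)^p = 1 := by norm_num
    rw [h1]
    have hcard : (Finset.Ioc 1 m).card = m - 1 := by rw [Nat.card_Ioc]
    have hbound : ∀ n ∈ Finset.Ioc 1 m, ((n:ℕ):ℝ)^p ≤ (m:ℝ)^p := by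
      intro n hn
      simp only [Finset.mem_Ioc] at hn
      exact Real.rpow_le_rpow (by positivity) (by exact_mod_cast hn.2) hp0
    have := Finset.sum_le_card_nsmul _ _ _ hbound
    rw [hcard] at this
    have hc : ((m - 1 : ℕ):ℝ) = (m:ℝ) - 1 := by
      push_cast [Nat.cast_sub hm]; ring
    rw [nsmul_eq_mul, hc] at this
    linarith
  rcases eq_or_lt_of_le hm with heq | hlt
  · -- m = 1
    have hm1 : m = 1 := heq.symm
    subst hm1
    simp only [Nat.cast_one] at hsum hκ ⊢
    have h2p : (2:ℝ)^p ≤ 1 + p := by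
      have h := rpow_one_add_le_one_add_mul_self (s := (1:ℝ)) (by norm_num) hp0 (by linarith)
      norm_num at h
      linarith
    have hbern : 1 + (p+1)*(2*lam - lam^2) ≤ (1 + (2*lam-lam^2))^(p+1) :=
      one_add_mul_self_le_rpow_one_add (by linarith) (by linarith)
    have hκpow : (1 + (2*lam-lam^2))^(p+1) ≤ κ^(p+1) :=
      Real.rpow_le_rpow (by linarith) (by linarith) (by linarith)
    have hsum1 : (∑ n ∈ Finset.Icc (1:ℕ) 1, (n:ℝ)^p) = 1 := by norm_num
    rw [hsum1]
    have h2 : lam^2 * ((1:ℝ)+1)^p ≤ lam^2 * (1+p) := by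
      have : ((1:ℝ)+1) = 2 := by norm_num
      rw [this]
      nlinarith [h2p, sq_nonneg lam]
    have h3 : lam^2 * (1+p) ≤ (p+1)*(2*lam - lam^2) := by
      have e : (p+1)*(2*lam - lam^2) - lam^2 * (1+p) = (1+p)*(2*lam*(1-lam)) := by ring
      have e2 : 0 ≤ (1+p)*(2*lam*(1-lam)) := by
        apply mul_nonneg (by linarith)
        apply mul_nonneg (by linarith) (by linarith)
      linarith
    linarith [h2, h3, hbern, hκpow]
  · -- 2 ≤ m
    have hM2 : (2:ℝ) ≤ (m:ℝ) := by exact_mod_cast hlt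
    set M : ℝ := (m:ℝ) with hM
    have hMpos : (0:ℝ) < M := by linarith
    have hMp : (0:ℝ) < M^p := Real.rpow_pos_of_pos hMpos _
    have hiM : (0:ℝ) < 1/M := by positivity
    have hhalf : 1/M ≤ 1/2 := by
      rw [div_le_div_iff₀ hMpos (by norm_num)]; linarith
    have hc1 : (1/M)^p ≤ 1 + p*(1/M - 1) := by
      have h := rpow_one_add_le_one_add_mul_self (s := 1/M - 1) (by linarith) hp0 (by linarith)
      rw [show (1:ℝ)+(1/M-1) = 1/M by ring] at h
      exact h
    have hc2 : (1+1/M)^p ≤ 1 + p*(1/M) :=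
      rpow_one_add_le_one_add_mul_self (by linarith) hp0 (by linarith)
    have hone : M^p * (1/M)^p = 1 := by
      rw [← Real.mul_rpow hMpos.le hiM.le, mul_one_div_cancel hMpos.ne', Real.one_rpow]
    have hMp1 : (M+1)^p = M^p * (1+1/M)^p := by
      rw [← Real.mul_rpow hMpos.le (by positivity)]
      congr 1
      field_simp
    -- 1 ≤ M^p * (1 + p/M - p)
    have h1le : (1:ℝ) ≤ M^p * (1 + p*(1/M) - p) := by
      calc (1:ℝ) = M^p * (1/M)^p := hone.symm
        _ ≤ M^p * (1 + p*(1/M - 1)) := by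
            exact mul_le_mul_of_nonneg_left hc1 hMp.le
        _ = M^p * (1 + p*(1/M) - p) := by ring
    -- (M+lam)*M^p ≤ κ^(p+1)
    have hκ1 : (M + lam) * M^p ≤ κ^(p+1) := by
      have ha : M + lam ≤ M + (2*lam - lam^2) := by nlinarith
      have hb : (M+lam)^(p+1) ≤ κ^(p+1) :=
        Real.rpow_le_rpow (by linarith) (by linarith) (by linarith)
      have hcc : (M+lam)^(p+1) = (M+lam)*(M+lam)^p := by
        rw [show p+1 = 1+p by ring, Real.rpow_add (by linarith), Real.rpow_one]
      have hd : M^p ≤ (M+lam)^p := Real.rpow_le_rpow hMpos.le (by linarith) hp0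
      calc (M+lam)*M^p ≤ (M+lam)*(M+lam)^p :=
            mul_le_mul_of_nonneg_left hd (by linarith)
        _ = (M+lam)^(p+1) := hcc.symm
        _ ≤ κ^(p+1) := hb
    -- key algebra
    have hkey : 1 + (M-1)*M^p + lam^2*(M+1)^p ≤ (M + lam) * M^p := by
      have h2 : lam^2*(M+1)^p ≤ lam^2 * (M^p * (1 + p*(1/M))) := by
        rw [hMp1]
        have h2a := mul_le_mul_of_nonneg_left hc2 hMp.le
        have h2b := mul_le_mul_of_nonneg_left h2a (sq_nonneg lam)
        calc lam^2 * (M^p * (1+1/M)^p) = lam^2 * (M^p * ((1+1/M)^p)) := by ring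
          _ ≤ lam^2 * (M^p * (1 + p*(1/M))) := h2b
      have hfrac : lam^2 * (1 + p*(1/M)) + (1 + p*(1/M) - p) ≤ 1 + lam := by
        have e1 : lam^2 ≤ lam := by nlinarith
        have e2 : p*(1/M) + p*(1/M)*lam^2 ≤ p := by
          have t0 : (0:ℝ) ≤ p*(1/M) := by positivity
          have t1 : p*(1/M)*lam^2 ≤ p*(1/M) := by nlinarith [sq_nonneg lam]
          have t2 : p*(1/M) ≤ p*(1/2) := by
            apply mul_le_mul_of_nonneg_left hhalf hp0
          linarith
        have e3 : lam^2*(1+p*(1/M)) = lam^2 + p*(1/M)*lam^2 := by ring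
        linarith [e1, e2, e3]
      have hmul := mul_le_mul_of_nonneg_left hfrac hMp.le
      have ha1 : 1 + (M-1)*M^p + lam^2*(M+1)^p
          ≤ M^p*(1 + p*(1/M) - p) + (M-1)*M^p + lam^2 * (M^p * (1 + p*(1/M))) := by
        linarith [h1le, h2]
      have hb1 : M^p*(1 + p*(1/M) - p) + lam^2 * (M^p * (1 + p*(1/M)))
          = M^p * (lam^2 * (1 + p*(1/M)) + (1 + p*(1/M) - p)) := by ring
      have hb2 : (M+lam)*M^p = M^p*(1+lam) + (M-1)*M^p := by ring
      calc 1 + (M-1)*M^p + lam^2*(M+1)^p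
          ≤ M^p*(1 + p*(1/M) - p) + (M-1)*M^p + lam^2 * (M^p * (1 + p*(1/M))) := ha1
        _ = M^p * (lam^2 * (1 + p*(1/M)) + (1 + p*(1/M) - p)) + (M-1)*M^p := by
            rw [← hb1]; ring
        _ ≤ M^p*(1+lam) + (M-1)*M^p := by linarith [hmul]
        _ = (M+lam)*M^p := hb2.symm
    calc (∑ n ∈ Finset.Icc 1 m, (n:ℝ)^p) + lam^2 * (M+1)^p
        ≤ (1 + (M-1)*M^p) + lam^2*(M+1)^p := by linarith
      _ ≤ (M + lam) * M^p := by linarith [hkey]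
      _ ≤ κ^(p+1) := hκ1

private lemma sum_int_natAbs_le {v : ℕ → ℝ} (hv : ∀ n, 0 ≤ v n) {C : ℝ}
    (hC : ∀ T : Finset ℕ, ∑ n ∈ T, v n ≤ C) (s : Finset ℤ) :
    ∑ k ∈ s, v k.natAbs ≤ 2*C := by
  classical
  have hmaps : ∀ k ∈ s, k.natAbs ∈ s.image Int.natAbs :=
    fun k hk => Finset.mem_image_of_mem _ hk
  rw [← Finset.sum_fiberwise_of_maps_to' hmaps v]
  have hstep : ∀ n ∈ s.image Int.natAbs,
      (∑ k ∈ s.filter (fun k => k.natAbs = n), v n) ≤ 2 * v n := by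
    intro n _
    rw [Finset.sum_const, nsmul_eq_mul]
    have hsub : s.filter (fun k => k.natAbs = n) ⊆ ({(n:ℤ), -(n:ℤ)} : Finset ℤ) := by
      intro k hk
      simp only [Finset.mem_filter] at hk
      rcases Int.natAbs_eq_iff.1 hk.2 with h | h
      · simp [h]
      · simp [h]
    have hcard : (s.filter (fun k => k.natAbs = n)).card ≤ 2 := by
      calc (s.filter (fun k => k.natAbs = n)).card ≤ ({(n:ℤ), -(n:ℤ)} : Finset ℤ).card :=
            Finset.card_le_card hsub
        _ ≤ 2 := Finset.card_insert_le _ _ |>.trans (by simp)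
    have : ((s.filter (fun k => k.natAbs = n)).card : ℝ) ≤ 2 := by exact_mod_cast hcard
    exact mul_le_mul_of_nonneg_right this (hv n)
  calc ∑ n ∈ s.image Int.natAbs, ∑ k ∈ s.filter (fun k => k.natAbs = n), v n
      ≤ ∑ n ∈ s.image Int.natAbs, 2 * v n := Finset.sum_le_sum hstep
    _ = 2 * ∑ n ∈ s.image Int.natAbs, v n := by rw [Finset.mul_sum]
    _ ≤ 2 * C := by
        have := hC (s.image Int.natAbs)
        linarith

private lemma claim_high {r θ κ : ℝ} (m : ℕ) (hm : 1 ≤ m) (hr1 : 1 < r)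
    (hθ0 : 0 ≤ θ) (hθ1 : θ ≤ 1) (hκm : κ = (m:ℝ) + θ)
    {w : ℕ → ℝ} (hw0 : ∀ n, 0 ≤ w n)
    (hwlow : ∀ n, n ≤ m → w n = 0)
    (hwb : w (m+1) = (1-θ) * ((m:ℝ)+1)^(-r))
    (hwtail : ∀ n, m+2 ≤ n → w n = (n:ℝ)^(-r))
    (T : Finset ℕ) : ∑ n ∈ T, w n ≤ κ^(1-r)/(r-1) := by
  classical
  have hmR : (1:ℝ) ≤ (m:ℝ) := by exact_mod_cast hm
  have hκpos : 0 < κ := by rw [hκm]; linarith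
  have hrpos : (0:ℝ) < r - 1 := by linarith
  set N := max (T.sup id) (m+1) with hN
  have hNm : m+1 ≤ N := le_max_right _ _
  -- reduce to the interval [m+1, N]
  have h1 : ∑ n ∈ T, w n = ∑ n ∈ T.filter (fun n => m+1 ≤ n), w n := by
    rw [← Finset.sum_filter_add_sum_filter_not T (fun n => m+1 ≤ n)]
    have : ∑ n ∈ T.filter (fun n => ¬ (m+1 ≤ n)), w n = 0 := by
      apply Finset.sum_eq_zero
      intro n hn
      simp only [Finset.mem_filter, not_le] at hn
      exact hwlow n (by omega)
    rw [this, add_zero]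
  have hsub : T.filter (fun n => m+1 ≤ n) ⊆ Finset.Icc (m+1) N := by
    intro n hn
    simp only [Finset.mem_filter] at hn
    simp only [Finset.mem_Icc]
    exact ⟨hn.2, le_trans (Finset.le_sup (f := id) hn.1) (le_max_left _ _)⟩
  have h2 : ∑ n ∈ T, w n ≤ ∑ n ∈ Finset.Icc (m+1) N, w n := by
    rw [h1]
    exact Finset.sum_le_sum_of_subset_of_nonneg hsub (fun n _ _ => hw0 n)
  -- split off the boundary term
  have hmem : m+1 ∈ Finset.Icc (m+1) N := by simp [hNm]
  have h3 : ∑ n ∈ Finset.Icc (m+1) N, w n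
      = w (m+1) + ∑ n ∈ Finset.Icc (m+2) N, w n := by
    rw [← Finset.insert_erase hmem, Finset.sum_insert (Finset.notMem_erase _ _),
      Finset.Icc_erase_left]
    congr 1
    apply Finset.sum_congr _ (fun _ _ => rfl)
    rw [← Finset.Icc_add_one_left_eq_Ioc]; rfl
  have h4 : ∑ n ∈ Finset.Icc (m+2) N, w n = ∑ n ∈ Finset.Icc (m+2) N, (n:ℝ)^(-r) := by
    apply Finset.sum_congr rfl
    intro n hn
    simp only [Finset.mem_Icc] at hn
    exact hwtail n hn.1
  have htel := telescope_tail hr1 (m+1) (by omega) N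
  have hcast : (((m+1:ℕ)):ℝ) = (m:ℝ)+1 := by push_cast; ring
  rw [show m+1+1 = m+2 by ring, hcast] at htel
  have htan := tangent_ineq (s := r-1) (a := κ) (b := (m:ℝ)+1) hrpos hκpos
    (by rw [hκm]; linarith)
  rw [show (-(r-1+1) : ℝ) = -r by ring, show (-(r-1) : ℝ) = 1-r by ring,
    show ((m:ℝ)+1) - κ = 1-θ by rw [hκm]; ring] at htan
  -- htan : (r-1) * (1-θ) * (m+1)^(-r) + (m+1)^(1-r) ≤ κ^(1-r)

  have hfinal : (r-1) * (∑ n ∈ T, w n) ≤ κ^(1-r) := by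
    have hw1 : (r-1) * w (m+1) = (r-1)*(1-θ)*((m:ℝ)+1)^(-r) := by rw [hwb]; ring
    have hs2 : (r-1) * ∑ n ∈ Finset.Icc (m+2) N, w n ≤ ((m:ℝ)+1)^(1-r) := by
      rw [h4]; exact htel
    calc (r-1) * (∑ n ∈ T, w n) ≤ (r-1) * ∑ n ∈ Finset.Icc (m+1) N, w n := by
          apply mul_le_mul_of_nonneg_left h2 hrpos.le
      _ = (r-1) * w (m+1) + (r-1) * ∑ n ∈ Finset.Icc (m+2) N, w n := by rw [h3]; ring
      _ ≤ (r-1)*(1-θ)*((m:ℝ)+1)^(-r) + ((m:ℝ)+1)^(1-r) := by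
          rw [hw1]; linarith [hs2]
      _ ≤ κ^(1-r) := htan
  rw [le_div_iff₀ hrpos]
  linarith [hfinal]

set_option maxHeartbeats 2000000 in
/-- Spectral splitting bound for u_x: for 3/4 < α ≤ 1, any κ ≥ 1 and all x,
|u_x(x)| ≤ √2 (2π)^{1-α} κ^{3/2-α} ‖(-Δ)^{α/2}u‖ + √(2/(4α-3)) (2π)^{1-2α} κ^{3/2-2α} ‖(-Δ)^α u‖. -/
theorem spectral_splitting_bound_deriv (α : ℝ) (hα : 3/4 < α) (hα1 : α ≤ 1)
    (u : ℝ → ℝ) (c : ℤ → ℂ)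
    (hu : ContDiff ℝ (⊤ : ℕ∞) u) (hper : Function.Periodic u 1)
    (hmean : (∫ x in (0:ℝ)..1, u x) = 0)
    (habs : Summable fun k : ℤ => |(k:ℝ)| * ‖c k‖)
    (hrep : ∀ x : ℝ, (u x : ℂ) = ∑' k : ℤ, c k * Complex.exp (2 * (π:ℂ) * Complex.I * k * x))
    (hrep' : ∀ x : ℝ, ((deriv u x : ℝ) : ℂ)
      = ∑' k : ℤ, (2 * (π:ℂ) * Complex.I * k) * c k * Complex.exp (2 * (π:ℂ) * Complex.I * k * x))
    (hsα : Summable fun k : ℤ => (2 * π * |(k:ℝ)|) ^ (2*α) * ‖c k‖^2)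
    (hs2α : Summable fun k : ℤ => (2 * π * |(k:ℝ)|) ^ (4*α) * ‖c k‖^2)
    (κ : ℝ) (hκ : 1 ≤ κ) (x : ℝ) :
    |deriv u x| ≤ Real.sqrt 2 * (2*π) ^ (1-α) * κ ^ (3/2-α)
        * (∑' k : ℤ, (2 * π * |(k:ℝ)|) ^ (2*α) * ‖c k‖^2) ^ ((1:ℝ)/2)
      + Real.sqrt (2/(4*α-3)) * (2*π) ^ (1-2*α) * κ ^ (3/2-2*α)
        * (∑' k : ℤ, (2 * π * |(k:ℝ)|) ^ (4*α) * ‖c k‖^2) ^ ((1:ℝ)/2) := by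
  classical
  have hπ : (0:ℝ) < π := Real.pi_pos
  have hP : (0:ℝ) < 2*π := by linarith
  have hκ0 : (0:ℝ) ≤ κ := by linarith
  -- floor and fractional part
  set m : ℕ := ⌊κ⌋₊ with hm_def
  have hm1 : 1 ≤ m := Nat.le_floor (by exact_mod_cast hκ)
  have hmR : (1:ℝ) ≤ (m:ℝ) := by exact_mod_cast hm1
  have hmκ : (m:ℝ) ≤ κ := Nat.floor_le hκ0
  have hκm : κ < (m:ℝ) + 1 := Nat.lt_floor_add_one κ
  set θ : ℝ := κ - m with hθ_def
  have hθ0 : 0 ≤ θ := by simp only [hθ_def]; linarith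
  have hθ1 : θ < 1 := by simp only [hθ_def]; linarith
  set lam : ℝ := 1 - Real.sqrt (1-θ) with hlam_def
  have hsq : Real.sqrt (1-θ) ^ 2 = 1-θ := Real.sq_sqrt (by linarith)
  have hsqrt_nonneg : 0 ≤ Real.sqrt (1-θ) := Real.sqrt_nonneg _
  have hsqrt_le_one : Real.sqrt (1-θ) ≤ 1 := by nlinarith [hsq, hsqrt_nonneg]
  have hlam0 : 0 ≤ lam := by simp only [hlam_def]; linarith
  have hlam1 : lam ≤ 1 := by simp only [hlam_def]; linarith
  have h1lam : (1-lam)^2 = 1-θ := by rw [hlam_def, sub_sub_cancel]; exact hsq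
  have hθlam : θ = 2*lam - lam^2 := by nlinarith [h1lam]
  -- exponents
  have hp0 : (0:ℝ) ≤ 2-2*α := by linarith
  have hp1 : (2-2*α : ℝ) ≤ 1/2 := by linarith
  have hr1 : (1:ℝ) < 4*α-2 := by linarith
  -- the weight profile
  set φN : ℕ → ℝ := fun n => if n = 0 then 0 else if n ≤ m then 1 else if n = m+1 then lam else 0
    with hφN_def
  have hφ_nonneg : ∀ n, 0 ≤ φN n := by
    intro n; simp only [hφN_def]
    split_ifs <;> linarith [hlam0, hlam1]
  have hφ_le_one : ∀ n, φN n ≤ 1 := by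
    intro n; simp only [hφN_def]
    split_ifs <;> linarith [hlam0, hlam1]
  have hφ_zero : ∀ n, m+1 < n → φN n = 0 := by
    intro n hn; simp only [hφN_def]
    rw [if_neg (by omega), if_neg (by omega), if_neg (by omega)]
  have hφ_one : ∀ n, 1 ≤ n → n ≤ m → φN n = 1 := by
    intro n h1 h2; simp only [hφN_def]
    rw [if_neg (by omega), if_pos h2]
  have hφ_bdry : φN (m+1) = lam := by
    simp only [hφN_def]
    simp
  have hφ00 : φN 0 = 0 := by
    simp only [hφN_def]
    simp
  -- abbreviations
  set fL : ℤ → ℝ := fun k => φN k.natAbs * (2*π*|(k:ℝ)|) ^ (1-α) with hfL_def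
  set gL : ℤ → ℝ := fun k => (2*π*|(k:ℝ)|) ^ α * ‖c k‖ with hgL_def
  set fH : ℤ → ℝ := fun k => (1 - φN k.natAbs) * (2*π*|(k:ℝ)|) ^ (1-2*α) with hfH_def
  set gH : ℤ → ℝ := fun k => (2*π*|(k:ℝ)|) ^ (2*α) * ‖c k‖ with hgH_def
  have hfL_nonneg : ∀ k, 0 ≤ fL k := fun k =>
    mul_nonneg (hφ_nonneg _) (Real.rpow_nonneg (by positivity) _)
  have hgL_nonneg : ∀ k, 0 ≤ gL k := fun k =>
    mul_nonneg (Real.rpow_nonneg (by positivity) _) (norm_nonneg _)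
  have hfH_nonneg : ∀ k, 0 ≤ fH k := fun k =>
    mul_nonneg (by linarith [hφ_le_one k.natAbs]) (Real.rpow_nonneg (by positivity) _)
  have hgH_nonneg : ∀ k, 0 ≤ gH k := fun k =>
    mul_nonneg (Real.rpow_nonneg (by positivity) _) (norm_nonneg _)
  -- pointwise splitting
  have h_split : ∀ k : ℤ, 2*π*|(k:ℝ)| * ‖c k‖ = fL k * gL k + fH k * gH k := by
    intro k
    by_cases hk : k = 0
    · subst hk
      have h0 : |((0:ℤ):ℝ)| = 0 := by norm_num
      simp only [hfL_def, hgL_def, hfH_def, hgH_def, h0, mul_zero, zero_mul,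
        Int.natAbs_zero, hφ00]
      rw [Real.zero_rpow (by intro h; linarith : (1-2*α) ≠ 0),
        Real.zero_rpow (by intro h; linarith : (2*α) ≠ 0)]
      ring
    · have habsk : (0:ℝ) < |(k:ℝ)| := by
        have : ((k:ℝ)) ≠ 0 := by exact_mod_cast hk
        exact abs_pos.2 this
      have hw : (0:ℝ) < 2*π*|(k:ℝ)| := by positivity
      have e1 : (2*π*|(k:ℝ)|)^(1-α) * (2*π*|(k:ℝ)|)^α = 2*π*|(k:ℝ)| := by
        rw [← Real.rpow_add hw]
        norm_num
      have e2 : (2*π*|(k:ℝ)|)^(1-2*α) * (2*π*|(k:ℝ)|)^(2*α) = 2*π*|(k:ℝ)| := by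
        rw [← Real.rpow_add hw]
        norm_num
      simp only [hfL_def, hgL_def, hfH_def, hgH_def]
      calc 2*π*|(k:ℝ)| * ‖c k‖
          = φN k.natAbs * (2*π*|(k:ℝ)|) * ‖c k‖
            + (1 - φN k.natAbs) * (2*π*|(k:ℝ)|) * ‖c k‖ := by ring
        _ = φN k.natAbs * (2*π*|(k:ℝ)|) ^ (1-α) * ((2*π*|(k:ℝ)|) ^ α * ‖c k‖)
            + (1 - φN k.natAbs) * (2*π*|(k:ℝ)|) ^ (1-2*α) * ((2*π*|(k:ℝ)|) ^ (2*α) * ‖c k‖) := by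
            rw [show φN k.natAbs * (2*π*|(k:ℝ)|) ^ (1-α) * ((2*π*|(k:ℝ)|) ^ α * ‖c k‖)
              = φN k.natAbs * ((2*π*|(k:ℝ)|) ^ (1-α) * (2*π*|(k:ℝ)|) ^ α) * ‖c k‖ by ring, e1,
              show (1 - φN k.natAbs) * (2*π*|(k:ℝ)|) ^ (1-2*α) * ((2*π*|(k:ℝ)|) ^ (2*α) * ‖c k‖)
              = (1 - φN k.natAbs) * ((2*π*|(k:ℝ)|) ^ (1-2*α) * (2*π*|(k:ℝ)|) ^ (2*α)) * ‖c k‖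
                by ring, e2]
  -- step 1 : pointwise bound by the sum of Fourier coefficients
  have hS_a : Summable (fun k : ℤ => 2*π*|(k:ℝ)| * ‖c k‖) := by
    have := habs.mul_left (2*π)
    refine this.congr fun k => ?_
    ring
  have hnorm_term : ∀ k : ℤ,
      ‖(2*(π:ℂ)*Complex.I*k) * c k * Complex.exp (2*(π:ℂ)*Complex.I*k*x)‖
        = 2*π*|(k:ℝ)| * ‖c k‖ := by
    intro k
    rw [norm_mul, norm_mul]
    have h2 : ‖Complex.exp (2*(π:ℂ)*Complex.I*(k:ℂ)*(x:ℂ))‖ = 1 := by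
      have e : 2*(π:ℂ)*Complex.I*(k:ℂ)*(x:ℂ) = ((2*π*(k:ℝ)*x : ℝ):ℂ) * Complex.I := by
        push_cast; ring
      rw [e, Complex.norm_exp_ofReal_mul_I]
    have h1 : ‖(2*(π:ℂ)*Complex.I*(k:ℂ))‖ = 2*π*|(k:ℝ)| := by
      have e : 2*(π:ℂ)*Complex.I*(k:ℂ) = (((2*π*(k:ℝ)) : ℝ):ℂ) * Complex.I := by
        push_cast; ring
      rw [e, norm_mul, Complex.norm_I, mul_one, Complex.norm_real, Real.norm_eq_abs,
        abs_mul, abs_of_pos hP]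
    rw [h1, h2, mul_one]
  have hstep1 : |deriv u x| ≤ ∑' k : ℤ, 2*π*|(k:ℝ)| * ‖c k‖ := by
    have hSnorm : Summable (fun k : ℤ =>
        ‖(2*(π:ℂ)*Complex.I*k) * c k * Complex.exp (2*(π:ℂ)*Complex.I*k*x)‖) := by
      refine hS_a.congr fun k => ?_
      rw [hnorm_term k]
    calc |deriv u x| = ‖((deriv u x : ℝ) : ℂ)‖ := by
          rw [Complex.norm_real, Real.norm_eq_abs]
      _ = ‖∑' k : ℤ, (2*(π:ℂ)*Complex.I*k) * c k * Complex.exp (2*(π:ℂ)*Complex.I*k*x)‖ := by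
          rw [hrep' x]
      _ ≤ ∑' k : ℤ, ‖(2*(π:ℂ)*Complex.I*k) * c k * Complex.exp (2*(π:ℂ)*Complex.I*k*x)‖ :=
          norm_tsum_le_tsum_norm hSnorm
      _ = ∑' k : ℤ, 2*π*|(k:ℝ)| * ‖c k‖ := tsum_congr hnorm_term
  -- square identities
  have sq_rpow : ∀ (y q : ℝ), 0 ≤ y → (y^q)^2 = y^(q*2) := by
    intro y q hy
    rw [Real.rpow_mul hy, Real.rpow_two]
  have habs_natAbs : ∀ k : ℤ, |(k:ℝ)| = (k.natAbs : ℝ) := by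
    intro k
    rw [Nat.cast_natAbs, Int.cast_abs]
  -- ℕ-level weights
  set vL : ℕ → ℝ := fun n => (φN n)^2 * (2*π*(n:ℝ)) ^ ((1-α)*2) with hvL_def
  set vH : ℕ → ℝ := fun n => (1 - φN n)^2 * (2*π*(n:ℝ)) ^ ((1-2*α)*2) with hvH_def
  have hvL_nonneg : ∀ n, 0 ≤ vL n := fun n =>
    mul_nonneg (sq_nonneg _) (Real.rpow_nonneg (by positivity) _)
  have hvH_nonneg : ∀ n, 0 ≤ vH n := fun n =>
    mul_nonneg (sq_nonneg _) (Real.rpow_nonneg (by positivity) _)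
  have hfL_sq : ∀ k : ℤ, fL k ^ 2 = vL k.natAbs := by
    intro k
    simp only [hfL_def, hvL_def, mul_pow]
    rw [sq_rpow _ _ (by positivity), habs_natAbs k]
  have hfH_sq : ∀ k : ℤ, fH k ^ 2 = vH k.natAbs := by
    intro k
    simp only [hfH_def, hvH_def, mul_pow]
    rw [sq_rpow _ _ (by positivity), habs_natAbs k]
  have hgL_sq : ∀ k : ℤ, gL k ^ 2 = (2 * π * |(k:ℝ)|) ^ (2*α) * ‖c k‖^2 := by
    intro k
    simp only [hgL_def, mul_pow]
    rw [sq_rpow _ _ (by positivity), show α*2 = 2*α by ring]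
  have hgH_sq : ∀ k : ℤ, gH k ^ 2 = (2 * π * |(k:ℝ)|) ^ (4*α) * ‖c k‖^2 := by
    intro k
    simp only [hgH_def, mul_pow]
    rw [sq_rpow _ _ (by positivity), show (2*α)*2 = 4*α by ring]
  -- summability
  have hgL2 : Summable fun k => gL k ^ 2 := hsα.congr fun k => (hgL_sq k).symm
  have hgH2 : Summable fun k => gH k ^ 2 := hs2α.congr fun k => (hgH_sq k).symm
  have hfL_supp : ∀ k : ℤ, k ∉ Finset.Icc (-(m+1:ℤ)) (m+1) → fL k = 0 := by
    intro k hk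
    have : m+1 < k.natAbs := by
      simp only [Finset.mem_Icc, not_and_or, not_le] at hk
      omega
    simp only [hfL_def, hφ_zero _ this, zero_mul]
  have hfL2 : Summable fun k => fL k ^ 2 :=
    summable_of_ne_finset_zero (s := Finset.Icc (-(m+1:ℤ)) (m+1))
      (fun k hk => by rw [hfL_supp k hk]; norm_num)
  have hfLgL : Summable fun k => fL k * gL k :=
    summable_of_ne_finset_zero (s := Finset.Icc (-(m+1:ℤ)) (m+1))
      (fun k hk => by rw [hfL_supp k hk]; norm_num)
  have hfHgH : Summable fun k => fH k * gH k := by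
    have h := hS_a.sub hfLgL
    refine h.congr fun k => ?_
    have := h_split k
    linarith [this]
  -- ℕ-level low bound
  have hNlow : ∀ T : Finset ℕ, ∑ n ∈ T, vL n ≤ (2*π)^(2-2*α) * κ^(3-2*α) := by
    intro T
    have hzero : ∀ n ∈ T, n ∉ T ∩ Finset.Icc 1 (m+1) → vL n = 0 := by
      intro n hn hn'
      simp only [Finset.mem_inter, Finset.mem_Icc, not_and_or] at hn'
      have hn'' : n = 0 ∨ m+1 < n := by
        rcases hn' with h | h
        · exact absurd hn h
        · omega
      rcases hn'' with h | h
      · simp only [hvL_def, h, hφ00]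
        ring
      · simp only [hvL_def, hφ_zero _ h]
        norm_num
    have h1 : ∑ n ∈ T, vL n = ∑ n ∈ T ∩ Finset.Icc 1 (m+1), vL n :=
      (Finset.sum_subset Finset.inter_subset_left (fun n h1 h2 => hzero n h1 (by
        simp only [Finset.mem_inter] at h2 ⊢
        intro hcon
        exact h2 hcon))).symm
    rw [h1]
    have h2 : ∑ n ∈ T ∩ Finset.Icc 1 (m+1), vL n ≤ ∑ n ∈ Finset.Icc 1 (m+1), vL n :=
      Finset.sum_le_sum_of_subset_of_nonneg Finset.inter_subset_right
        (fun n _ _ => hvL_nonneg n)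
    have h3 : ∑ n ∈ Finset.Icc 1 (m+1), vL n
        = ∑ n ∈ Finset.Icc 1 m, vL n + vL (m+1) :=
      Finset.sum_Icc_succ_top (by omega) _
    have h4 : ∑ n ∈ Finset.Icc 1 m, vL n = ∑ n ∈ Finset.Icc 1 m, (2*π)^(2-2*α) * (n:ℝ)^(2-2*α) := by
      apply Finset.sum_congr rfl
      intro n hn
      simp only [Finset.mem_Icc] at hn
      simp only [hvL_def, hφ_one n hn.1 hn.2, one_pow, one_mul]
      rw [show (1-α)*2 = 2-2*α by ring, Real.mul_rpow hP.le (by positivity)]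
    have h5 : vL (m+1) = lam^2 * ((2*π)^(2-2*α) * ((m:ℝ)+1)^(2-2*α)) := by
      simp only [hvL_def, hφ_bdry]
      rw [show (1-α)*2 = 2-2*α by ring]
      have : ((m+1:ℕ):ℝ) = (m:ℝ)+1 := by push_cast; ring
      rw [this, Real.mul_rpow hP.le (by positivity)]
    have hkey := claim_low (p := 2-2*α) (lam := lam) (κ := κ) m hm1 hp0 hp1 hlam0 hlam1
      (by rw [← hθlam]; simp only [hθ_def]; linarith)
    have hpow_nonneg : (0:ℝ) ≤ (2*π)^(2-2*α) := Real.rpow_nonneg hP.le _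
    calc ∑ n ∈ T ∩ Finset.Icc 1 (m+1), vL n
        ≤ ∑ n ∈ Finset.Icc 1 m, vL n + vL (m+1) := by rw [← h3]; exact h2
      _ = (2*π)^(2-2*α) * ((∑ n ∈ Finset.Icc 1 m, (n:ℝ)^(2-2*α)) + lam^2 * ((m:ℝ)+1)^(2-2*α)) := by
          rw [h4, h5, ← Finset.mul_sum]; ring
      _ ≤ (2*π)^(2-2*α) * κ^(3-2*α) := by
          rw [show (3-2*α:ℝ) = 2-2*α+1 by ring]
          exact mul_le_mul_of_nonneg_left hkey hpow_nonneg
  -- ℕ-level high bound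
  have hNhigh : ∀ T : Finset ℕ, ∑ n ∈ T, vH n
      ≤ (2*π)^(2-4*α) * (κ^(3-4*α)/(4*α-3)) := by
    intro T
    set wH : ℕ → ℝ := fun n => (1 - φN n)^2 * (n:ℝ)^(-(4*α-2)) with hwH_def
    have hwH0 : ∀ n, 0 ≤ wH n := fun n =>
      mul_nonneg (sq_nonneg _) (Real.rpow_nonneg (by positivity) _)
    have hvHwH : ∀ n, vH n = (2*π)^(2-4*α) * wH n := by
      intro n
      simp only [hvH_def, hwH_def]
      rw [show (1-2*α)*2 = 2-4*α by ring, Real.mul_rpow hP.le (by positivity),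
        show (-(4*α-2) : ℝ) = 2-4*α by ring]
      ring
    have hwlow : ∀ n, n ≤ m → wH n = 0 := by
      intro n hn
      rcases Nat.eq_zero_or_pos n with h | h
      · simp only [hwH_def, h]
        rw [show ((0:ℕ):ℝ) = 0 by norm_num, Real.zero_rpow (by intro hcon; nlinarith)]
        ring
      · simp only [hwH_def, hφ_one n h hn]
        norm_num
    have hwb : wH (m+1) = (1-θ) * ((m:ℝ)+1)^(-(4*α-2)) := by
      simp only [hwH_def, hφ_bdry]
      rw [show ((m+1:ℕ):ℝ) = (m:ℝ)+1 by push_cast; ring, h1lam]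
    have hwtail : ∀ n, m+2 ≤ n → wH n = (n:ℝ)^(-(4*α-2)) := by
      intro n hn
      simp only [hwH_def, hφ_zero _ (by omega : m+1 < n)]
      norm_num
    have hkey := claim_high (r := 4*α-2) (θ := θ) (κ := κ) m hm1 hr1 hθ0 hθ1.le
      (by simp only [hθ_def]; ring) hwH0 hwlow hwb hwtail T
    rw [show (1-(4*α-2) : ℝ) = 3-4*α by ring, show (4*α-2-1 : ℝ) = 4*α-3 by ring] at hkey
    calc ∑ n ∈ T, vH n = (2*π)^(2-4*α) * ∑ n ∈ T, wH n := by
          rw [Finset.mul_sum]; exact Finset.sum_congr rfl fun n _ => hvHwH n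
      _ ≤ (2*π)^(2-4*α) * (κ^(3-4*α)/(4*α-3)) :=
          mul_le_mul_of_nonneg_left hkey (Real.rpow_nonneg hP.le _)
  -- tsum bounds on the weights
  have hWL : ∑' k, fL k ^ 2 ≤ 2 * ((2*π)^(2-2*α) * κ^(3-2*α)) := by
    refine Summable.tsum_le_of_sum_le hfL2 fun s => ?_
    calc ∑ k ∈ s, fL k ^ 2 = ∑ k ∈ s, vL k.natAbs := Finset.sum_congr rfl fun k _ => hfL_sq k
      _ ≤ 2 * ((2*π)^(2-2*α) * κ^(3-2*α)) := sum_int_natAbs_le hvL_nonneg hNlow s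
  have hfH2 : Summable fun k => fH k ^ 2 := by
    refine summable_of_sum_le (c := 2 * ((2*π)^(2-4*α) * (κ^(3-4*α)/(4*α-3))))
      (fun k => sq_nonneg _) (fun s => ?_)
    calc ∑ k ∈ s, fH k ^ 2 = ∑ k ∈ s, vH k.natAbs := Finset.sum_congr rfl fun k _ => hfH_sq k
      _ ≤ 2 * ((2*π)^(2-4*α) * (κ^(3-4*α)/(4*α-3))) := sum_int_natAbs_le hvH_nonneg hNhigh s
  have hWH : ∑' k, fH k ^ 2 ≤ 2 * ((2*π)^(2-4*α) * (κ^(3-4*α)/(4*α-3))) := by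
    refine Summable.tsum_le_of_sum_le hfH2 fun s => ?_
    calc ∑ k ∈ s, fH k ^ 2 = ∑ k ∈ s, vH k.natAbs := Finset.sum_congr rfl fun k _ => hfH_sq k
      _ ≤ 2 * ((2*π)^(2-4*α) * (κ^(3-4*α)/(4*α-3))) := sum_int_natAbs_le hvH_nonneg hNhigh s
  -- Cauchy–Schwarz
  have hCSL := tsum_cauchy_schwarz fL gL hfL_nonneg hgL_nonneg hfL2 hgL2
  have hCSH := tsum_cauchy_schwarz fH gH hfH_nonneg hgH_nonneg hfH2 hgH2
  -- identify the g-sums with the statement sums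
  have hgLt : ∑' k, gL k ^ 2 = ∑' k : ℤ, (2 * π * |(k:ℝ)|) ^ (2*α) * ‖c k‖^2 :=
    tsum_congr hgL_sq
  have hgHt : ∑' k, gH k ^ 2 = ∑' k : ℤ, (2 * π * |(k:ℝ)|) ^ (4*α) * ‖c k‖^2 :=
    tsum_congr hgH_sq
  -- sqrt computations
  have hsqrtL : Real.sqrt (2 * ((2*π)^(2-2*α) * κ^(3-2*α)))
      = Real.sqrt 2 * (2*π)^(1-α) * κ^(3/2-α) := by
    rw [Real.sqrt_mul (by norm_num : (0:ℝ) ≤ 2),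
      Real.sqrt_mul (Real.rpow_nonneg hP.le _)]
    rw [Real.sqrt_eq_rpow ((2*π)^(2-2*α)), Real.sqrt_eq_rpow (κ^(3-2*α)),
      ← Real.rpow_mul hP.le, ← Real.rpow_mul hκ0]
    rw [show (2-2*α)*(1/2) = 1-α by ring, show (3-2*α)*(1/2) = 3/2-α by ring, mul_assoc]
  have hsqrtH : Real.sqrt (2 * ((2*π)^(2-4*α) * (κ^(3-4*α)/(4*α-3))))
      = Real.sqrt (2/(4*α-3)) * (2*π)^(1-2*α) * κ^(3/2-2*α) := by
    have hd : (0:ℝ) < 4*α-3 := by linarith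
    have e : 2 * ((2*π)^(2-4*α) * (κ^(3-4*α)/(4*α-3)))
        = (2/(4*α-3)) * ((2*π)^(2-4*α) * κ^(3-4*α)) := by
      field_simp
    rw [e, Real.sqrt_mul (by positivity), Real.sqrt_mul (Real.rpow_nonneg hP.le _)]
    rw [Real.sqrt_eq_rpow ((2*π)^(2-4*α)), Real.sqrt_eq_rpow (κ^(3-4*α)),
      ← Real.rpow_mul hP.le, ← Real.rpow_mul hκ0]
    rw [show (2-4*α)*(1/2) = 1-2*α by ring, show (3-4*α)*(1/2) = 3/2-2*α by ring, mul_assoc]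
  -- final assembly
  have hsplit_t : ∑' k : ℤ, 2*π*|(k:ℝ)| * ‖c k‖ = (∑' k, fL k * gL k) + ∑' k, fH k * gH k := by
    rw [← Summable.tsum_add hfLgL hfHgH]
    exact tsum_congr h_split
  have hT1 : ∑' k, fL k * gL k
      ≤ Real.sqrt 2 * (2*π)^(1-α) * κ^(3/2-α)
        * (∑' k : ℤ, (2 * π * |(k:ℝ)|) ^ (2*α) * ‖c k‖^2) ^ ((1:ℝ)/2) := by
    calc ∑' k, fL k * gL k ≤ Real.sqrt (∑' k, fL k ^ 2) * Real.sqrt (∑' k, gL k ^ 2) := hCSL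
      _ ≤ Real.sqrt (2 * ((2*π)^(2-2*α) * κ^(3-2*α))) * Real.sqrt (∑' k, gL k ^ 2) :=
          mul_le_mul_of_nonneg_right (Real.sqrt_le_sqrt hWL) (Real.sqrt_nonneg _)
      _ = Real.sqrt 2 * (2*π)^(1-α) * κ^(3/2-α)
          * (∑' k : ℤ, (2 * π * |(k:ℝ)|) ^ (2*α) * ‖c k‖^2) ^ ((1:ℝ)/2) := by
          rw [hsqrtL, hgLt,
            Real.sqrt_eq_rpow (∑' k : ℤ, (2 * π * |(k:ℝ)|) ^ (2*α) * ‖c k‖^2)]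
  have hT2 : ∑' k, fH k * gH k
      ≤ Real.sqrt (2/(4*α-3)) * (2*π)^(1-2*α) * κ^(3/2-2*α)
        * (∑' k : ℤ, (2 * π * |(k:ℝ)|) ^ (4*α) * ‖c k‖^2) ^ ((1:ℝ)/2) := by
    calc ∑' k, fH k * gH k ≤ Real.sqrt (∑' k, fH k ^ 2) * Real.sqrt (∑' k, gH k ^ 2) := hCSH
      _ ≤ Real.sqrt (2 * ((2*π)^(2-4*α) * (κ^(3-4*α)/(4*α-3)))) * Real.sqrt (∑' k, gH k ^ 2) :=
          mul_le_mul_of_nonneg_right (Real.sqrt_le_sqrt hWH) (Real.sqrt_nonneg _)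
      _ = Real.sqrt (2/(4*α-3)) * (2*π)^(1-2*α) * κ^(3/2-2*α)
          * (∑' k : ℤ, (2 * π * |(k:ℝ)|) ^ (4*α) * ‖c k‖^2) ^ ((1:ℝ)/2) := by
          rw [hsqrtH, hgHt,
            Real.sqrt_eq_rpow (∑' k : ℤ, (2 * π * |(k:ℝ)|) ^ (4*α) * ‖c k‖^2)]
  calc |deriv u x| ≤ ∑' k : ℤ, 2*π*|(k:ℝ)| * ‖c k‖ := hstep1
    _ = (∑' k, fL k * gL k) + ∑' k, fH k * gH k := hsplit_t
    _ ≤ _ := add_le_add hT1 hT2
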